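/- If k₁ and k₂ are distinct positive integers, then the groups P_{k₁} and P_{k₂} are not isomorphic, because their abelianizations are not isomorphic. -/

import Mathlib

/-- The relations of `P_k = ⟨a, b ∣ a b^(2^k) a⁻¹ b^(2^k), b a² b⁻¹ a²⟩`. -/
def PkRels (k : ℕ) : Set (FreeGroup (Fin 2)) :=
  { FreeGroup.of 0 * (FreeGroup.of 1) ^ (2 ^ k) * (FreeGroup.of 0)⁻¹ * (FreeGroup.of 1) ^ (2 ^ k),
    FreeGroup.of 1 * (FreeGroup.of 0) ^ 2 * (FreeGroup.of 1)⁻¹ * (FreeGroup.of 0) ^ 2 }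

abbrev Pk (k : ℕ) : Type := PresentedGroup (PkRels k)

/-!
In any abelian quotient the relator `x y x⁻¹ y` becomes `y²`, so the relations of `P_k` become
`a⁴ = 1` and `b^(2^(k+1)) = 1`; conversely, sending `a, b` to the standard generators of
`ℤ/4 × ℤ/2^(k+1)` respects the relations. Hence `P_kᵃᵇ ≅ ℤ/4 × ℤ/2^(k+1)` has order `2^(k+3)`,
which determines `k`.
-/

open Multiplicative

theorem mul_mul_inv_mul_eq_sq {G : Type*} [CommGroup G] (x y : G) : x * y * x⁻¹ * y = y ^ 2 := by
  rw [mul_right_comm x, mul_inv_cancel, one_mul, sq]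

section ZModProd

variable {m n : ℕ}

theorem ofAdd_one_zero_pow : ofAdd ((1 : ZMod m), (0 : ZMod n)) ^ m = 1 := by
  simp [← ofAdd_nsmul]

theorem ofAdd_zero_one_pow : ofAdd ((0 : ZMod m), (1 : ZMod n)) ^ n = 1 := by
  simp [← ofAdd_nsmul]

theorem zmodProd_hom_ext {G : Type*} [Group G] {f g : Multiplicative (ZMod m × ZMod n) →* G}
    (h₁ : f (ofAdd (1, 0)) = g (ofAdd (1, 0))) (h₂ : f (ofAdd (0, 1)) = g (ofAdd (0, 1))) :
    f = g := by
  refine MonoidHom.ext fun x => ?_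
  obtain ⟨i, hi⟩ := ZMod.intCast_surjective (toAdd x).1
  obtain ⟨j, hj⟩ := ZMod.intCast_surjective (toAdd x).2
  have hx : x =
      ofAdd ((1 : ZMod m), (0 : ZMod n)) ^ i * ofAdd ((0 : ZMod m), (1 : ZMod n)) ^ j := by
    apply toAdd.injective
    ext <;> simp [← hi, ← hj]
  rw [hx, map_mul, map_mul, map_zpow, map_zpow, map_zpow, map_zpow, h₁, h₂]

variable {G : Type*} [CommGroup G]

def zmodProdLift (a b : G) (ha : a ^ m = 1) (hb : b ^ n = 1) :
    Multiplicative (ZMod m × ZMod n) →* G :=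
  AddMonoidHom.toMultiplicativeLeft <|
    (ZMod.lift m ⟨zmultiplesHom _ (Additive.ofMul a), by simp [← ofMul_pow, ha]⟩).coprod
    (ZMod.lift n ⟨zmultiplesHom _ (Additive.ofMul b), by simp [← ofMul_pow, hb]⟩)

variable (a b : G) (ha : a ^ m = 1) (hb : b ^ n = 1)

theorem zmodProdLift_ofAdd_intCast (i j : ℤ) :
    zmodProdLift a b ha hb (ofAdd ((i : ZMod m), (j : ZMod n))) = a ^ i * b ^ j := by
  simp [zmodProdLift]

@[simp]
theorem zmodProdLift_ofAdd_one_zero : zmodProdLift a b ha hb (ofAdd (1, 0)) = a := by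
  simpa using zmodProdLift_ofAdd_intCast a b ha hb 1 0

@[simp]
theorem zmodProdLift_ofAdd_zero_one : zmodProdLift a b ha hb (ofAdd (0, 1)) = b := by
  simpa using zmodProdLift_ofAdd_intCast a b ha hb 0 1

end ZModProd

namespace Pk

open Abelianization

variable (k : ℕ)

def a : Pk k := PresentedGroup.of 0

def b : Pk k := PresentedGroup.of 1

theorem a_mul_b_pow_mul_a_inv_mul_b_pow : a k * b k ^ 2 ^ k * (a k)⁻¹ * b k ^ 2 ^ k = 1 :=
  PresentedGroup.one_of_mem (Or.inl rfl)

theorem b_mul_a_sq_mul_b_inv_mul_a_sq : b k * a k ^ 2 * (b k)⁻¹ * a k ^ 2 = 1 :=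
  PresentedGroup.one_of_mem (Or.inr rfl)

theorem of_a_pow_four : of (a k) ^ 4 = 1 := by
  have h := congrArg of (b_mul_a_sq_mul_b_inv_mul_a_sq k)
  simp only [map_mul, map_inv, map_pow, map_one] at h
  rwa [mul_mul_inv_mul_eq_sq, ← pow_mul] at h

theorem of_b_pow_two_pow_succ : of (b k) ^ 2 ^ (k + 1) = 1 := by
  have h := congrArg of (a_mul_b_pow_mul_a_inv_mul_b_pow k)
  simp only [map_mul, map_inv, map_pow, map_one] at h
  rwa [mul_mul_inv_mul_eq_sq, ← pow_mul, ← pow_succ] at h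

def toZModProd : Pk k →* Multiplicative (ZMod 4 × ZMod (2 ^ (k + 1))) :=
  PresentedGroup.toGroup (f := ![ofAdd (1, 0), ofAdd (0, 1)]) <| by
    rintro r (rfl | rfl) <;>
      simp only [map_mul, map_pow, map_inv, FreeGroup.lift_apply_of, Matrix.cons_val_zero,
        Matrix.cons_val_one, mul_mul_inv_mul_eq_sq, ← pow_mul]
    · rw [← pow_succ, ofAdd_zero_one_pow]
    · exact ofAdd_one_zero_pow

def abelianizationMulEquiv :
    Abelianization (Pk k) ≃* Multiplicative (ZMod 4 × ZMod (2 ^ (k + 1))) :=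
  MonoidHom.toMulEquiv (lift (toZModProd k))
    (zmodProdLift (of (a k)) (of (b k)) (of_a_pow_four k) (of_b_pow_two_pow_succ k))
    (hom_ext _ _ <| PresentedGroup.ext fun i => by fin_cases i <;> simp [toZModProd, a, b])
    (zmodProd_hom_ext (by simp [toZModProd, a]) (by simp [toZModProd, b]))

theorem card_abelianization : Nat.card (Abelianization (Pk k)) = 2 ^ (k + 3) := by
  rw [Nat.card_congr (abelianizationMulEquiv k).toEquiv, Nat.card_congr toAdd,
    Nat.card_prod, Nat.card_zmod, Nat.card_zmod]
  ring

end Pk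

theorem Pk_not_isomorphic_general (k₁ k₂ : ℕ) (hne : k₁ ≠ k₂) :
    ¬ Nonempty (Abelianization (Pk k₁) ≃* Abelianization (Pk k₂)) ∧
    ¬ Nonempty (Pk k₁ ≃* Pk k₂) := by
  have h_ab : ¬ Nonempty (Abelianization (Pk k₁) ≃* Abelianization (Pk k₂)) := fun ⟨e⟩ => by
    have h_card := Nat.card_congr e.toEquiv
    rw [Pk.card_abelianization, Pk.card_abelianization] at h_card
    exact hne (by simpa using Nat.pow_right_injective le_rfl h_card)
  exact ⟨h_ab, fun ⟨e⟩ => h_ab ⟨e.abelianizationCongr⟩⟩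

/-- If `k₁ ≠ k₂` are positive integers, then `P_{k₁} ≇ P_{k₂}`; indeed already their
abelianizations are not isomorphic. -/
theorem Pk_not_isomorphic (k₁ k₂ : ℕ) (hk₁ : 0 < k₁) (hk₂ : 0 < k₂) (hne : k₁ ≠ k₂) :
    ¬ Nonempty (Abelianization (Pk k₁) ≃* Abelianization (Pk k₂)) ∧
    ¬ Nonempty (Pk k₁ ≃* Pk k₂) :=
  Pk_not_isomorphic_general k₁ k₂ hne
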